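/- arXiv:2602.08858 — 3 statements merged into one kernel-verified Lean document; each statement's English description precedes it below -/
import Mathlib

section
/- Fix σ_W > 0 and c ∈ (0, 1]. There exist constants m, M > 0 (depending only on σ_W and c) such that for all σ_H ≥ σ_W and all ρ₁, ρ₂ ∈ [c, 1], setting σ̃ = √(σ_H² + σ_W² + 2ρ₁·σ_H·σ_W), the quantity F = σ_H² + σ_W² + σ_W⁴ + 2ρ₁·σ_H·σ_W + 2ρ₂·σ_W²·σ̃ satisfies σ_H² + m·σ_H ≤ F ≤ σ_H² + M·σ_H. -/
theorem preLN_layer_variance_increment (σW c : ℝ) (hσW : 0 < σW)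
    (hc : c ∈ Set.Ioc (0 : ℝ) 1) :
    ∃ m M : ℝ, 0 < m ∧ 0 < M ∧
      ∀ σH : ℝ, σW ≤ σH → ∀ ρ₁ ∈ Set.Icc c 1, ∀ ρ₂ ∈ Set.Icc c 1,
        σH ^ 2 + m * σH ≤
          σH ^ 2 + σW ^ 2 + σW ^ 4 + 2 * ρ₁ * σH * σW
            + 2 * ρ₂ * σW ^ 2 * Real.sqrt (σH ^ 2 + σW ^ 2 + 2 * ρ₁ * σH * σW) ∧
        σH ^ 2 + σW ^ 2 + σW ^ 4 + 2 * ρ₁ * σH * σW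
            + 2 * ρ₂ * σW ^ 2 * Real.sqrt (σH ^ 2 + σW ^ 2 + 2 * ρ₁ * σH * σW) ≤
          σH ^ 2 + M * σH := by
  obtain ⟨hc0, hc1⟩ := hc
  refine ⟨2 * c * σW, σW + σW ^ 3 + 2 * σW + 4 * σW ^ 2, by positivity, by positivity, ?_⟩
  intro σH hσH ρ₁ hρ₁ ρ₂ hρ₂
  obtain ⟨hρ₁l, hρ₁u⟩ := hρ₁
  obtain ⟨hρ₂l, hρ₂u⟩ := hρ₂
  have hσH0 : 0 < σH := lt_of_lt_of_le hσW hσH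
  have hρ₁0 : 0 < ρ₁ := lt_of_lt_of_le hc0 hρ₁l
  have hρ₂0 : 0 < ρ₂ := lt_of_lt_of_le hc0 hρ₂l
  have hs0 : 0 ≤ Real.sqrt (σH ^ 2 + σW ^ 2 + 2 * ρ₁ * σH * σW) := Real.sqrt_nonneg _
  constructor
  · nlinarith [mul_nonneg (mul_nonneg hρ₂0.le (sq_nonneg σW)) hs0, sq_nonneg σW,
      sq_nonneg (σW ^ 2), mul_pos hσH0 hσW]
  · have hsle : Real.sqrt (σH ^ 2 + σW ^ 2 + 2 * ρ₁ * σH * σW) ≤ 2 * σH := by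
      rw [show (2 : ℝ) * σH = Real.sqrt ((2 * σH) ^ 2) from (Real.sqrt_sq (by positivity)).symm]
      apply Real.sqrt_le_sqrt
      nlinarith [mul_pos hσH0 hσW]
    nlinarith [mul_le_mul_of_nonneg_left hsle (by positivity : (0:ℝ) ≤ 2 * ρ₂ * σW ^ 2),
      mul_nonneg (mul_nonneg (sub_nonneg.2 hρ₂u) (sq_nonneg σW)) hs0,
      mul_le_mul_of_nonneg_left hσH hσW.le,
      mul_le_mul_of_nonneg_left hσH (pow_nonneg hσW.le 3),
      mul_nonneg (mul_nonneg (sub_nonneg.2 hρ₁u) hσH0.le) hσW.le]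
end

section
/- Let (a_ℓ)_{ℓ≥0} be a sequence of nonnegative reals with a₀ > 0, and suppose there is m > 0 such that a_{ℓ+1} ≥ a_ℓ + m·√(a_ℓ) for all ℓ. Then there exists c > 0 such that a_ℓ ≥ c·(ℓ + 1)² for all ℓ ≥ 0. -/
theorem variance_lower_bound_quadratic (a : ℕ → ℝ) (ha : ∀ ℓ, 0 ≤ a ℓ)
    (ha0 : 0 < a 0) (m : ℝ) (hm : 0 < m)
    (hrec : ∀ ℓ, a ℓ + m * Real.sqrt (a ℓ) ≤ a (ℓ + 1)) :
    ∃ c : ℝ, 0 < c ∧ ∀ ℓ : ℕ, c * (ℓ + 1) ^ 2 ≤ a ℓ := by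
  set c : ℝ := min (a 0) (m ^ 2 / 9) with hc
  have hcpos : 0 < c := lt_min ha0 (by positivity)
  have hc9 : c ≤ m ^ 2 / 9 := min_le_right _ _
  have hmsc : 3 * c ≤ m * Real.sqrt c := by
    have hsc : Real.sqrt c ≤ m / 3 := by
      rw [show m / 3 = Real.sqrt ((m/3)^2) by
        rw [Real.sqrt_sq (by positivity)]]
      exact Real.sqrt_le_sqrt (by nlinarith)
    have h1 : 3 * Real.sqrt c * Real.sqrt c ≤ m * Real.sqrt c := by
      have := Real.sqrt_nonneg c
      nlinarith
    have h2 : Real.sqrt c * Real.sqrt c = c := Real.mul_self_sqrt hcpos.le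
    nlinarith
  refine ⟨c, hcpos, ?_⟩
  intro ℓ
  induction ℓ with
  | zero => have := min_le_left (a 0) (m ^ 2 / 9); push_cast; linarith
  | succ n ih =>
    have hsn : Real.sqrt (c * (n + 1) ^ 2) ≤ Real.sqrt (a n) := Real.sqrt_le_sqrt ih
    have heq : Real.sqrt (c * (n + 1) ^ 2) = Real.sqrt c * (n + 1) := by
      rw [Real.sqrt_mul hcpos.le, Real.sqrt_sq (by positivity)]
    have key : a n + m * Real.sqrt (a n) ≤ a (n + 1) := hrec n
    have hn1 : (0:ℝ) ≤ (n:ℝ) + 1 := by positivity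
    have hms : m * (Real.sqrt c * (n + 1)) ≤ m * Real.sqrt (a n) := by
      rw [← heq]; exact mul_le_mul_of_nonneg_left hsn hm.le
    have : c * ((n:ℝ) + 2) ^ 2 ≤ c * (n + 1) ^ 2 + m * (Real.sqrt c * (n + 1)) := by
      nlinarith [mul_le_mul_of_nonneg_right hmsc hn1]
    push_cast
    nlinarith
end

section
/- Let (a_ℓ)_{ℓ≥0} be a sequence of nonnegative reals with a₀ > 0, and suppose there are constants 0 < m ≤ M such that a_ℓ + m·√(a_ℓ) ≤ a_{ℓ+1} ≤ a_ℓ + M·√(a_ℓ) + M for all ℓ. Then a_ℓ = Θ(ℓ²): there exist constants c₂ ≥ c₁ > 0 such that c₁·(ℓ + 1)² ≤ a_ℓ ≤ c₂·(ℓ + 1)² for all ℓ ≥ 0. -/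
theorem variance_growth_quadratic (a : ℕ → ℝ) (ha : ∀ ℓ, 0 ≤ a ℓ)
    (ha0 : 0 < a 0) (m M : ℝ) (hm : 0 < m) (hmM : m ≤ M)
    (hrec : ∀ ℓ, a ℓ + m * Real.sqrt (a ℓ) ≤ a (ℓ + 1) ∧
      a (ℓ + 1) ≤ a ℓ + M * Real.sqrt (a ℓ) + M) :
    ∃ c₁ c₂ : ℝ, 0 < c₁ ∧ c₁ ≤ c₂ ∧
      ∀ ℓ : ℕ, c₁ * (ℓ + 1) ^ 2 ≤ a ℓ ∧ a ℓ ≤ c₂ * (ℓ + 1) ^ 2 := by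
  set s : ℝ := Real.sqrt (a 0) with hs
  have hM : 0 < M := lt_of_lt_of_le hm hmM
  have hs0 : 0 < s := Real.sqrt_pos.mpr ha0
  set δ : ℝ := min (m / 4) s with hδ
  have hδ0 : 0 < δ := lt_min (by linarith) hs0
  have hδs : δ ≤ s := min_le_right _ _
  have hδm : δ ≤ m / 4 := min_le_left _ _
  set K : ℝ := M + 1 with hK
  have hK0 : 0 < K := by positivity
  -- bounds on sqrt (a ℓ)
  have key : ∀ ℓ : ℕ, s + ℓ * δ ≤ Real.sqrt (a ℓ) ∧ Real.sqrt (a ℓ) ≤ s + ℓ * K := by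
    intro ℓ
    induction ℓ with
    | zero => simp [hs]
    | succ n ih =>
      obtain ⟨hlo, hhi⟩ := ih
      have hsa : s ≤ Real.sqrt (a n) := by nlinarith [hδ0.le, (Nat.cast_nonneg n : (0:ℝ) ≤ n)]
      have hsq : Real.sqrt (a n) ^ 2 = a n := Real.sq_sqrt (ha n)
      have hsan : 0 ≤ Real.sqrt (a n) := Real.sqrt_nonneg _
      constructor
      · have h1 : (Real.sqrt (a n) + δ) ^ 2 ≤ a n + m * Real.sqrt (a n) := by
          nlinarith
        have h2 : Real.sqrt (a n) + δ ≤ Real.sqrt (a (n + 1)) := by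
          have := (hrec n).1
          calc Real.sqrt (a n) + δ = Real.sqrt ((Real.sqrt (a n) + δ) ^ 2) := by
                rw [Real.sqrt_sq (by positivity)]
            _ ≤ Real.sqrt (a (n + 1)) := Real.sqrt_le_sqrt (by linarith)
        push_cast
        nlinarith
      · have h1 : a (n + 1) ≤ (Real.sqrt (a n) + K) ^ 2 := by
          have := (hrec n).2
          nlinarith
        have h2 : Real.sqrt (a (n + 1)) ≤ Real.sqrt (a n) + K := by
          calc Real.sqrt (a (n + 1)) ≤ Real.sqrt ((Real.sqrt (a n) + K) ^ 2) :=
                Real.sqrt_le_sqrt h1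
            _ = Real.sqrt (a n) + K := Real.sqrt_sq (by positivity)
        push_cast
        linarith
  refine ⟨δ ^ 2, (s + K) ^ 2, by positivity, by nlinarith, fun ℓ => ?_⟩
  obtain ⟨hlo, hhi⟩ := key ℓ
  have hsq : Real.sqrt (a ℓ) ^ 2 = a ℓ := Real.sq_sqrt (ha ℓ)
  have hn : (0 : ℝ) ≤ (ℓ : ℝ) := (Nat.cast_nonneg ℓ : (0:ℝ) ≤ ℓ)
  constructor
  · have h1 : δ * (ℓ + 1) ≤ Real.sqrt (a ℓ) := by nlinarith
    nlinarith [mul_le_mul h1 h1 (by positivity) (Real.sqrt_nonneg _)]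
  · have h1 : Real.sqrt (a ℓ) ≤ (s + K) * (ℓ + 1) := by nlinarith
    nlinarith [mul_le_mul h1 h1 (Real.sqrt_nonneg _) (by positivity)]
end
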